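/- arXiv:1103.1030 — 4 statements merged into one kernel-verified Lean document; each statement's English description precedes it below -/
import Mathlib

section
/- Let F = ⋃_{j ≥ 2} [2^j, 2^j + 1] ⊆ ℝ and define v : ℝ² → ℝ by v(x,y) = χ_F(x). Then v is not quasi-nearly subharmonic on ℝ²: there is no constant C > 0 such that v(a) ≤ (C/m(B(a,r))) ∫_{B(a,r)} v dm for all a ∈ ℝ² and all r > 0. -/
open MeasureTheory Metric Set

/-! At `a = (2^(k+2), 0)` the function equals `1`, but the disk `B(a, 2^(k+1))` meets only the
two strips over `[2^(k+1), 2^(k+1) + 1]` and `[2^(k+2), 2^(k+2) + 1]`, each contributing area at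
most `2r`. Hence `∫_{B(a,r)} v ≤ 4r` against `m(B(a,r)) = π r²`, and the inequality would force
`π r ≤ 4C` for arbitrarily large `r`. -/

namespace EuclideanSpace

lemma volume_setOf_apply_zero_mem_and_apply_one_mem (A B : Set ℝ) :
    volume {x : EuclideanSpace ℝ (Fin 2) | x 0 ∈ A ∧ x 1 ∈ B} = volume A * volume B := by
  have h := (volume_preserving_symm_measurableEquiv_toLp (Fin 2)).measure_preimage_equiv
    (univ.pi ![A, B])
  simp only [volume_pi_pi, Fin.prod_univ_two, Matrix.cons_val_zero, Matrix.cons_val_one] at h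
  convert h using 2
  ext x
  simp [Fin.forall_fin_two]

lemma volume_preimage_apply_zero_inter_ball_le (E : Set ℝ) (a : EuclideanSpace ℝ (Fin 2))
    (r : ℝ) :
    volume ((fun x => x 0) ⁻¹' E ∩ ball a r) ≤ volume (E ∩ ball (a 0) r) * .ofReal (2 * r) := by
  calc volume ((fun x => x 0) ⁻¹' E ∩ ball a r)
      ≤ volume {x : EuclideanSpace ℝ (Fin 2) | x 0 ∈ E ∩ ball (a 0) r ∧ x 1 ∈ ball (a 1) r} := by
        refine measure_mono fun x ⟨hxE, hx⟩ => ⟨⟨hxE, ?_⟩, ?_⟩ <;>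
          exact (PiLp.dist_apply_le x a _).trans_lt hx
    _ = volume (E ∩ ball (a 0) r) * .ofReal (2 * r) := by
        rw [volume_setOf_apply_zero_mem_and_apply_one_mem, Real.volume_ball]

lemma setIntegral_ball_indicator_apply_zero_le {E : Set ℝ} (hE : MeasurableSet E)
    (a : EuclideanSpace ℝ (Fin 2)) {r : ℝ} (hr : 0 ≤ r) :
    ∫ x in ball a r, E.indicator (fun _ => (1 : ℝ)) (x 0) ≤
      volume.real (E ∩ ball (a 0) r) * (2 * r) := by
  have hS : MeasurableSet ((fun x : EuclideanSpace ℝ (Fin 2) => x 0) ⁻¹' E) :=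
    (proj (0 : Fin 2)).continuous.measurable hE
  have hfin : volume (E ∩ ball (a 0) r) ≠ ⊤ := measure_ne_top_of_subset inter_subset_right
    measure_ball_lt_top.ne
  calc ∫ x in ball a r, E.indicator (fun _ => (1 : ℝ)) (x 0)
      = volume.real ((fun x => x 0) ⁻¹' E ∩ ball a r) := by
        rw [← measureReal_restrict_apply hS, ← integral_indicator_one hS]
        rfl
    _ ≤ (volume (E ∩ ball (a 0) r) * .ofReal (2 * r)).toReal :=
        ENNReal.toReal_mono (ENNReal.mul_ne_top hfin ENNReal.ofReal_ne_top)
          (volume_preimage_apply_zero_inter_ball_le E a r)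
    _ = volume.real (E ∩ ball (a 0) r) * (2 * r) := by
        rw [ENNReal.toReal_mul, ENNReal.toReal_ofReal (by positivity)]; rfl

end EuclideanSpace

lemma eq_or_eq_succ_of_mem_Icc_two_pow_of_mem_ball {j k : ℕ} {x : ℝ}
    (hj : x ∈ Icc ((2 : ℝ) ^ j) (2 ^ j + 1)) (hk : x ∈ ball ((2 : ℝ) ^ (k + 1)) (2 ^ k)) :
    j = k ∨ j = k + 1 := by
  rw [Real.ball_eq_Ioo] at hk
  obtain ⟨hjx, hxj⟩ := hj
  obtain ⟨hkx, hxk⟩ := hk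
  by_contra! hne
  rcases Nat.lt_or_gt_of_ne hne.1 with hlt | hgt
  · have : (2 : ℝ) ^ j + 1 ≤ 2 ^ k := by exact_mod_cast Nat.pow_lt_pow_right one_lt_two hlt
    have : (2 : ℝ) ^ (k + 1) = 2 * 2 ^ k := by ring
    linarith
  · have : (2 : ℝ) ^ (k + 2) ≤ 2 ^ j := pow_le_pow_right₀ one_le_two (by omega)
    have : (2 : ℝ) ^ (k + 2) = 4 * 2 ^ k := by ring
    have : (2 : ℝ) ^ (k + 1) = 2 * 2 ^ k := by ring
    linarith

lemma volume_iUnion_Icc_two_pow_inter_ball_le (k : ℕ) :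
    volume ((⋃ j : ℕ, Icc ((2 : ℝ) ^ j) (2 ^ j + 1)) ∩ ball (2 ^ (k + 1)) (2 ^ k)) ≤ 2 := by
  calc _ ≤ volume (Icc ((2 : ℝ) ^ k) (2 ^ k + 1) ∪ Icc (2 ^ (k + 1)) (2 ^ (k + 1) + 1)) := by
        refine measure_mono fun x ⟨hx, hball⟩ => ?_
        obtain ⟨j, hj⟩ := mem_iUnion.1 hx
        rcases eq_or_eq_succ_of_mem_Icc_two_pow_of_mem_ball hj hball with rfl | rfl
        exacts [Or.inl hj, Or.inr hj]
    _ ≤ volume (Icc ((2 : ℝ) ^ k) (2 ^ k + 1)) +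
          volume (Icc ((2 : ℝ) ^ (k + 1)) (2 ^ (k + 1) + 1)) := measure_union_le _ _
    _ = 2 := by simp [Real.volume_Icc]; norm_num

/-- with `F = ⋃_{j≥2} [2^j, 2^j+1]`, the function
`v(x,y) = χ_F(x)` is not quasi-nearly subharmonic on `ℝ²`. -/
theorem indicator_union_not_qns
    (F : Set ℝ) (hF : F = ⋃ j : ℕ, ⋃ (_ : 2 ≤ j), Set.Icc ((2 : ℝ) ^ j) (2 ^ j + 1))
    (v : EuclideanSpace ℝ (Fin 2) → ℝ)
    (hv : ∀ x, v x = F.indicator (fun _ => (1 : ℝ)) (x 0)) :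
    ¬ ∃ C : ℝ, 0 < C ∧ ∀ (a : EuclideanSpace ℝ (Fin 2)) (r : ℝ), 0 < r →
      v a ≤ (C / (volume (ball a r)).toReal) * ∫ x in ball a r, v x := by
  rintro ⟨C, hC, hqns⟩
  have hFm : MeasurableSet F := hF ▸ .iUnion fun _ => .iUnion fun _ => measurableSet_Icc
  have hFsub : F ⊆ ⋃ j : ℕ, Icc ((2 : ℝ) ^ j) (2 ^ j + 1) :=
    hF ▸ iUnion_mono fun _ => iUnion_subset fun _ => subset_rfl
  obtain ⟨k, hk⟩ := pow_unbounded_of_one_lt (4 * C / Real.pi) one_lt_two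
  obtain ⟨r, hr_def⟩ : ∃ r : ℝ, r = 2 ^ (k + 1) := ⟨_, rfl⟩
  have hr : 0 < r := hr_def ▸ by positivity
  obtain ⟨a, ha⟩ : ∃ a : EuclideanSpace ℝ (Fin 2), a 0 = 2 ^ (k + 2) := ⟨!₂[2 ^ (k + 2), 0], rfl⟩
  have hva : v a = 1 := by
    rw [hv, ha]
    exact indicator_of_mem (hF ▸ mem_iUnion₂.2 ⟨k + 2, by omega, le_rfl, by linarith⟩) _
  have hFball : volume.real (F ∩ ball (a 0) r) ≤ 2 :=
    ENNReal.toReal_le_of_le_ofReal zero_le_two <| by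
      simpa [ha, hr_def] using (measure_mono (inter_subset_inter_left _ hFsub)).trans
        (volume_iUnion_Icc_two_pow_inter_ball_le (k + 1))
  have hint : ∫ x in ball a r, v x ≤ 4 * r := by
    simp_rw [hv]
    calc _ ≤ volume.real (F ∩ ball (a 0) r) * (2 * r) :=
          EuclideanSpace.setIntegral_ball_indicator_apply_zero_le hFm a hr.le
      _ ≤ 2 * (2 * r) := by gcongr
      _ = 4 * r := by ring
  have hball : (volume (ball a r)).toReal = Real.pi * r ^ 2 := by
    simp [ENNReal.toReal_ofReal hr.le, Real.pi_nonneg, mul_comm]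
  have hpi : Real.pi * r ≤ 4 * C := by
    have h1 := (hva ▸ hball ▸ hqns a r hr).trans (mul_le_mul_of_nonneg_left hint (by positivity))
    rwa [show C / (Real.pi * r ^ 2) * (4 * r) = 4 * C / (Real.pi * r) by field_simp,
      one_le_div (by positivity)] at h1
  have hr_large : 4 * C < Real.pi * r :=
    ((div_lt_iff₀' Real.pi_pos).1 hk).trans <| mul_lt_mul_of_pos_left
      (hr_def ▸ pow_lt_pow_right₀ one_lt_two k.lt_succ_self) Real.pi_pos
  exact hpi.not_gt hr_large
end

section
/- Let E = ⋃_{j ≥ 2} [exp(2^j), exp(2^j + 1)] ⊆ (0,∞) and define u on Ω' = ℝ² \ {0} by u(w) = χ_E(|w|). Then u is quasi-nearly subharmonic on Ω': there exists a constant C > 0 such that u(a) ≤ (C/m(B(a,r))) ∫_{B(a,r)} u dm whenever the closed disk B̄(a,r) ⊆ Ω'. -/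
open MeasureTheory Metric Set Module

/-!
If `‖a‖ ∈ E`, then `‖a‖` lies in a block `[L, e L]` of `E`, whose length `(e - 1) L` is at least
`‖a‖ / 2 ≥ r / 2`. Pushing `a` radially by at most `r / 4` gives a disc of radius `r / 4` inside
`B(a, r)` on which every norm stays in the block, so `u = 1` there and the integral of `u` over
`B(a, r)` is at least `m(B(a, r)) / 16`. If `‖a‖ ∉ E`, then `u a = 0`.
-/

theorem Real.two_mul_exp_le_exp_add_one (s : ℝ) : 2 * Real.exp s ≤ Real.exp (s + 1) := by
  rw [Real.exp_add, mul_comm]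
  gcongr
  linarith [Real.exp_one_gt_d9]

theorem Real.exists_abs_sub_le_Icc_subset {x L R δ : ℝ} (hx : x ∈ Icc L R) (hδ : 0 ≤ δ)
    (hLR : 2 * δ ≤ R - L) : ∃ t, |t - x| ≤ δ ∧ Icc (t - δ) (t + δ) ⊆ Icc L R := by
  refine ⟨max (L + δ) (min x (R - δ)), abs_le.2 ⟨?_, ?_⟩, Icc_subset_Icc ?_ ?_⟩ <;>
    grind

section NormedSpace

variable {F : Type*} [NormedAddCommGroup F] [NormedSpace ℝ F]

theorem exists_norm_eq_dist_eq {a : F} (ha : a ≠ 0) {t : ℝ} (ht : 0 ≤ t) :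
    ∃ b : F, ‖b‖ = t ∧ dist b a = |t - ‖a‖| := by
  have ha' : 0 < ‖a‖ := norm_pos_iff.2 ha
  refine ⟨(t / ‖a‖) • a, ?_, ?_⟩
  · rw [norm_smul, Real.norm_of_nonneg (by positivity), div_mul_cancel₀ _ ha'.ne']
  · have : (t / ‖a‖) • a - a = (t / ‖a‖ - 1) • a := by rw [sub_smul, one_smul]
    rw [dist_eq_norm, this, norm_smul, Real.norm_eq_abs, ← abs_of_pos ha', ← abs_mul,
      abs_of_pos ha', sub_mul, div_mul_cancel₀ _ ha'.ne', one_mul]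

theorem exists_ball_subset_ball_forall_norm_mem_Icc {a : F} {L R δ : ℝ} (hL : 0 < L)
    (ha : ‖a‖ ∈ Icc L R) (hδ : 0 ≤ δ) (hLR : 2 * δ ≤ R - L) :
    ∃ b, ball b δ ⊆ ball a (2 * δ) ∧ ∀ x ∈ ball b δ, ‖x‖ ∈ Icc L R := by
  obtain ⟨t, hta, htLR⟩ := Real.exists_abs_sub_le_Icc_subset ha hδ hLR
  have ht : L ≤ t - δ := (htLR (left_mem_Icc.2 (by linarith))).1
  obtain ⟨b, hbt, hba⟩ :=
    exists_norm_eq_dist_eq (norm_pos_iff.1 (hL.trans_le ha.1)) (t := t) (by linarith)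
  refine ⟨b, ball_subset_ball' (by linarith), fun x hx => htLR ?_⟩
  have := (abs_norm_sub_norm_le x b).trans (mem_ball_iff_norm.1 hx).le
  rw [hbt, abs_le] at this
  constructor <;> linarith

end NormedSpace

section AddHaar

variable {F : Type*} [NormedAddCommGroup F] [NormedSpace ℝ F] [FiniteDimensional ℝ F]
  [MeasurableSpace F] [BorelSpace F] (μ : Measure F) [μ.IsAddHaarMeasure]

theorem addHaar_real_ball_mul_of_pos (x y : F) {s : ℝ} (hs : 0 < s) (r : ℝ) :
    μ.real (ball x (s * r)) = s ^ finrank ℝ F * μ.real (ball y r) := by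
  rw [measureReal_def, measureReal_def, Measure.addHaar_ball_mul_of_pos μ x hs,
    Measure.addHaar_ball_center μ y, ENNReal.toReal_mul, ENNReal.toReal_ofReal (by positivity)]

theorem indicator_norm_le_div_mul_setIntegral {S : Set ℝ} (hSm : MeasurableSet S)
    (hS : ∀ x ∈ S, ∃ L R, 0 < L ∧ x ∈ Icc L R ∧ x ≤ 2 * (R - L) ∧ Icc L R ⊆ S)
    {a : F} {r : ℝ} (hr : 0 < r) (hra : r ≤ ‖a‖) :
    S.indicator (fun _ => (1 : ℝ)) ‖a‖ ≤ (4 ^ finrank ℝ F / μ.real (ball a r)) *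
      ∫ x in ball a r, S.indicator (fun _ => (1 : ℝ)) ‖x‖ ∂μ := by
  have hint : IntegrableOn (fun x => S.indicator (fun _ => (1 : ℝ)) ‖x‖) (ball a r) μ := by
    change IntegrableOn ({x : F | ‖x‖ ∈ S}.indicator fun _ => 1) (ball a r) μ
    exact (integrableOn_const measure_ball_lt_top.ne).indicator (hSm.preimage measurable_norm)
  have hnonneg : ∀ x : F, 0 ≤ S.indicator (fun _ => (1 : ℝ)) ‖x‖ :=
    fun x => indicator_nonneg (fun _ _ => zero_le_one) _
  by_cases ha : ‖a‖ ∈ S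
  · obtain ⟨L, R, hL, haLR, hgap, hLRS⟩ := hS _ ha
    obtain ⟨b, hba, hbS⟩ := exists_ball_subset_ball_forall_norm_mem_Icc (δ := r / 4) hL haLR
      (by positivity) (by linarith)
    have hvol : μ.real (ball a r) = 4 ^ finrank ℝ F * μ.real (ball b (r / 4)) := by
      rw [← addHaar_real_ball_mul_of_pos μ a b four_pos, mul_div_cancel₀ _ four_ne_zero]
    have hpos : 0 < μ.real (ball b (r / 4)) :=
      ENNReal.toReal_pos (measure_ball_pos μ b (by positivity)).ne' measure_ball_lt_top.ne
    have hsub : ball b (r / 4) ⊆ ball a r := hba.trans (ball_subset_ball (by linarith))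
    have hsmall : μ.real (ball b (r / 4)) ≤ ∫ x in ball a r, S.indicator (fun _ => 1) ‖x‖ ∂μ :=
      calc μ.real (ball b (r / 4))
          = 1 * μ.real (ball b (r / 4)) := (one_mul _).symm
        _ ≤ ∫ x in ball b (r / 4), S.indicator (fun _ => (1 : ℝ)) ‖x‖ ∂μ :=
          setIntegral_ge_of_const_le_real measurableSet_ball measure_ball_lt_top.ne
            (fun x hx => (indicator_of_mem (hLRS (hbS x hx)) fun _ => (1 : ℝ)).ge)
            (hint.mono_set hsub)
        _ ≤ ∫ x in ball a r, S.indicator (fun _ => (1 : ℝ)) ‖x‖ ∂μ :=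
          setIntegral_mono_set hint (Filter.Eventually.of_forall hnonneg)
            hsub.eventuallyLE
    rw [indicator_of_mem ha, hvol, div_mul_eq_mul_div, le_div_iff₀ (by positivity), one_mul]
    gcongr
  · rw [indicator_of_notMem ha]
    exact mul_nonneg (by positivity) (setIntegral_nonneg measurableSet_ball fun x _ => hnonneg x)

end AddHaar

/-- with `E = ⋃_{j≥2} [exp(2^j), exp(2^j+1)]`, the function
`u(w) = χ_E(|w|)` is quasi-nearly subharmonic on `ℝ² \ {0}`. -/
theorem radial_indicator_qns
    (E : Set ℝ)
    (hE : E = ⋃ j : ℕ, ⋃ (_ : 2 ≤ j),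
      Set.Icc (Real.exp ((2 : ℝ) ^ j)) (Real.exp ((2 : ℝ) ^ j + 1)))
    (u : EuclideanSpace ℝ (Fin 2) → ℝ)
    (hu : ∀ w, u w = E.indicator (fun _ => (1 : ℝ)) ‖w‖) :
    ∃ C : ℝ, 0 < C ∧ ∀ (a : EuclideanSpace ℝ (Fin 2)) (r : ℝ), 0 < r →
      closedBall a r ⊆ ({0}ᶜ : Set (EuclideanSpace ℝ (Fin 2))) →
      u a ≤ (C / (volume (ball a r)).toReal) * ∫ x in ball a r, u x := by
  obtain rfl : u = fun w => E.indicator (fun _ => (1 : ℝ)) ‖w‖ := funext hu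
  have hEm : MeasurableSet E := hE ▸ .iUnion fun _ => .iUnion fun _ => measurableSet_Icc
  have hEfat : ∀ x ∈ E, ∃ L R, 0 < L ∧ x ∈ Icc L R ∧ x ≤ 2 * (R - L) ∧ Icc L R ⊆ E := by
    intro x hx
    rw [hE, mem_iUnion₂] at hx
    obtain ⟨j, hj, hxj⟩ := hx
    refine ⟨_, _, Real.exp_pos _, hxj, ?_, hE ▸ subset_iUnion₂_of_subset j hj subset_rfl⟩
    linarith [hxj.2, Real.two_mul_exp_le_exp_add_one ((2 : ℝ) ^ j)]
  refine ⟨4 ^ finrank ℝ (EuclideanSpace ℝ (Fin 2)), by positivity, fun a r hr hball => ?_⟩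
  have hra : r ≤ ‖a‖ := by
    by_contra! h
    exact hball (mem_closedBall.2 (by rw [dist_comm, dist_zero_right]; exact h.le)) rfl
  exact indicator_norm_le_div_mul_setIntegral volume hEm hEfat hr hra
end

section
/- Let y ∈ ℝⁿ, r > 0, and y₀ ∈ ℝⁿ with |y₀ − y| = 2r. Set G' = ℝⁿ \ {y₀} and u = χ_{B̄(y,r)} (the indicator of the closed ball). Then u is 3ⁿ-quasi-nearly subharmonic on G': for every a ∈ G' and every s > 0 with B̄(a,s) ⊆ G', u(a) ≤ (3ⁿ/m(B(a,s))) ∫_{B(a,s)} u dm. -/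
open MeasureTheory Metric

/-!
If `a ∈ B̄(y, r)` and `B̄(a, s)` misses `y₀`, then `s < |a - y₀| ≤ 3r`. Moving from `a` towards `y`
one finds a ball of radius `s/3` inside `B(a, s) ∩ B̄(y, r)`, so this intersection has at least
`3⁻ⁿ` of the volume of `B(a, s)`.
-/

section

variable {E : Type*} [NormedAddCommGroup E] [NormedSpace ℝ E]

theorem exists_ball_subset_ball_inter_closedBall {a y : E} {r s ρ : ℝ} (ha : a ∈ closedBall y r)
    (hρr : ρ ≤ r) (hρs : 2 * ρ ≤ s) : ∃ c, ball c ρ ⊆ ball a s ∩ closedBall y r := by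
  obtain hρ | hρ := lt_or_ge ρ 0
  · exact ⟨a, by simp [ball_eq_empty.2 hρ.le]⟩
  obtain ⟨c, hac, hcy⟩ := exists_dist_le_le (x := a) (z := y) (δ := s - ρ) (ε := r - ρ)
    (by linarith) (by linarith) (by linarith [mem_closedBall.1 ha])
  refine ⟨c, Set.subset_inter (ball_subset_ball' ?_)
    (ball_subset_closedBall.trans (closedBall_subset_closedBall' ?_))⟩
  · linarith [dist_comm a c]
  · linarith

variable [MeasurableSpace E] [BorelSpace E] [FiniteDimensional ℝ E] (μ : Measure E)
  [μ.IsAddHaarMeasure]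

theorem addHaar_ball_le_pow_mul_of_ball_div_subset {a c : E} {s k : ℝ} {t : Set E} (hk : 0 < k)
    (h : ball c (s / k) ⊆ t) : μ (ball a s) ≤ ENNReal.ofReal (k ^ Module.finrank ℝ E) * μ t :=
  calc μ (ball a s) = μ (ball c (k * (s / k))) := by
        rw [mul_div_cancel₀ _ hk.ne', Measure.addHaar_ball_center, Measure.addHaar_ball_center μ c]
    _ = ENNReal.ofReal (k ^ Module.finrank ℝ E) * μ (ball c (s / k)) := by
        rw [Measure.addHaar_ball_mul_of_pos μ c hk, Measure.addHaar_ball_center μ c]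
    _ ≤ ENNReal.ofReal (k ^ Module.finrank ℝ E) * μ t := by gcongr

theorem addHaar_ball_le_pow_mul_ball_inter_closedBall {a y : E} {r s k : ℝ}
    (ha : a ∈ closedBall y r) (hs : 0 ≤ s) (hk : 2 ≤ k) (hsk : s ≤ k * r) :
    μ (ball a s) ≤ ENNReal.ofReal (k ^ Module.finrank ℝ E) * μ (ball a s ∩ closedBall y r) := by
  have hk₀ : 0 < k := by linarith
  obtain ⟨c, hc⟩ := exists_ball_subset_ball_inter_closedBall (s := s) (ρ := s / k) ha
    (by rwa [div_le_iff₀' hk₀]) (by rw [← mul_div_assoc, div_le_iff₀ hk₀]; nlinarith)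
  exact addHaar_ball_le_pow_mul_of_ball_div_subset μ hk₀ hc

end

theorem closedBall_indicator_qns_pow_three_general {n : ℕ}
    (y y₀ : EuclideanSpace ℝ (Fin n)) (r : ℝ)
    (hy₀ : dist y₀ y = 2 * r)
    (u : EuclideanSpace ℝ (Fin n) → ℝ)
    (hu : ∀ x, u x = (closedBall y r).indicator (fun _ => (1 : ℝ)) x) :
    ∀ (a : EuclideanSpace ℝ (Fin n)) (s : ℝ), 0 < s →
      a ∈ ({y₀}ᶜ : Set (EuclideanSpace ℝ (Fin n))) →
      closedBall a s ⊆ ({y₀}ᶜ : Set (EuclideanSpace ℝ (Fin n))) →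
      u a ≤ ((3 : ℝ) ^ n / (volume (ball a s)).toReal) * ∫ x in ball a s, u x := by
  intro a s hs _ hsub
  obtain rfl : u = (closedBall y r).indicator 1 := funext hu
  by_cases hay : a ∈ closedBall y r
  swap
  · rw [Set.indicator_of_notMem hay]
    exact mul_nonneg (by positivity) (integral_nonneg fun x ↦ Set.indicator_nonneg (by simp) x)
  have hs3 : s ≤ 3 * r := by
    have : s < dist y₀ a := not_le.1 fun h ↦ hsub (mem_closedBall.2 h) rfl
    linarith [dist_triangle y₀ y a, dist_comm y a, mem_closedBall.1 hay]
  have hvol := addHaar_ball_le_pow_mul_ball_inter_closedBall volume hay hs.le (by norm_num) hs3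
  rw [finrank_euclideanSpace_fin] at hvol
  have hvol' := ENNReal.toReal_mono (by finiteness) hvol
  rw [ENNReal.toReal_mul, ENNReal.toReal_ofReal (by positivity)] at hvol'
  rw [Set.indicator_of_mem hay, Pi.one_apply, integral_indicator_one measurableSet_closedBall,
    measureReal_restrict_apply measurableSet_closedBall, div_mul_eq_mul_div, one_le_div
      (ENNReal.toReal_pos (measure_ball_pos _ _ hs).ne' measure_ball_lt_top.ne)]
  simpa [measureReal_def, Set.inter_comm] using hvol'

/-- the indicator of the closed ball `B̄(y,r)` is `3ⁿ`-qns on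
`ℝⁿ \ {y₀}` when `|y₀ − y| = 2r`. -/
theorem closedBall_indicator_qns_pow_three {n : ℕ}
    (y y₀ : EuclideanSpace ℝ (Fin n)) (r : ℝ) (hr : 0 < r)
    (hy₀ : dist y₀ y = 2 * r)
    (u : EuclideanSpace ℝ (Fin n) → ℝ)
    (hu : ∀ x, u x = (closedBall y r).indicator (fun _ => (1 : ℝ)) x) :
    ∀ (a : EuclideanSpace ℝ (Fin n)) (s : ℝ), 0 < s →
      a ∈ ({y₀}ᶜ : Set (EuclideanSpace ℝ (Fin n))) →
      closedBall a s ⊆ ({y₀}ᶜ : Set (EuclideanSpace ℝ (Fin n))) →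
      u a ≤ ((3 : ℝ) ^ n / (volume (ball a s)).toReal) * ∫ x in ball a s, u x :=
  closedBall_indicator_qns_pow_three_general y y₀ r hy₀ u hu
end

section
/- Let E = ⋃_{j ≥ 2} [exp(2^j), exp(2^j+1)] ⊆ (0,∞) and define v : ℂ \ {0} → ℝ by v(w) = ∫₀^{|w|} χ_E(t) dt. Then v ∘ exp is not regularly oscillating on ℂ: there is no constant C such that Lip(v∘exp)(z) ≤ C r⁻¹ sup_{ζ ∈ B(z,r)} |v(exp ζ) − v(exp z)| for all z ∈ ℂ and all r > 0. -/
/-!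
On `ℂ`, `v ∘ exp` is `F ∘ re` with `F x = ∫₀^{eˣ} χ_E`. At `x = 2ʲ + 1/2` the point `eˣ` is
interior to the block `[exp 2ʲ, exp (2ʲ + 1)]` of `E`, so `F' x = eˣ` and `Lip (v ∘ exp) x ≥ eˣ`.
On the ball of radius `r = 2ʲ / 2` around `x` the real part stays below `2ʲ⁺¹`, where the next
block starts, so `F` takes values in `[0, exp (2ʲ + 1)]` there and the oscillation is at most
`exp (2ʲ + 1)`. Regular oscillation would then give `eˣ ≤ C · (2 / 2ʲ) · exp (2ʲ + 1)`, i.e.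
`2ʲ ≤ 2 C e^{1/2}`, which fails for large `j`.
-/

open Metric Filter intervalIntegral
open scoped ENNReal Topology

/-- The pointwise (upper) Lipschitz constant, valued in `ℝ≥0∞`. -/
noncomputable def lipAt {α β : Type*} [PseudoMetricSpace α] [PseudoMetricSpace β]
    (g : α → β) (x : α) : ℝ≥0∞ :=
  Filter.limsup (fun y => ENNReal.ofReal (dist (g y) (g x) / dist y x)) (𝓝[≠] x)

open Set MeasureTheory

theorem HasDerivAt.lipAt_eq {𝕜 F : Type*} [NontriviallyNormedField 𝕜] [NormedAddCommGroup F]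
    [NormedSpace 𝕜 F] {f : 𝕜 → F} {f' : F} {x : 𝕜} (hf : HasDerivAt f f' x) :
    lipAt f x = ENNReal.ofReal ‖f'‖ := by
  have hslope := (hasDerivAt_iff_tendsto_slope.mp hf).norm
  refine (((ENNReal.continuous_ofReal.tendsto _).comp hslope).congr fun y => ?_).limsup_eq
  simp [slope_def_module, norm_smul, dist_eq_norm, div_eq_inv_mul]

theorem lipAt_comp_le_of_isometry {α β γ : Type*} [MetricSpace α] [PseudoMetricSpace β]
    [PseudoMetricSpace γ] {e : α → β} (he : Isometry e) (g : β → γ) (x : α) :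
    lipAt (g ∘ e) x ≤ lipAt g (e x) := by
  have hmap : Tendsto e (𝓝[≠] x) (𝓝[≠] (e x)) :=
    tendsto_nhdsWithin_of_tendsto_nhds_of_eventually_within _
      (he.continuous.continuousAt.tendsto.mono_left nhdsWithin_le_nhds)
      (eventually_nhdsWithin_of_forall fun y hy => he.injective.ne hy)
  unfold lipAt
  calc limsup (fun y => ENNReal.ofReal (dist ((g ∘ e) y) ((g ∘ e) x) / dist y x)) (𝓝[≠] x)
      = limsup (fun y => ENNReal.ofReal (dist (g y) (g (e x)) / dist y (e x)))
          (map e (𝓝[≠] x)) := by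
        rw [← limsup_comp (v := e)]; simp only [Function.comp_def, he.dist_eq]
    _ ≤ _ := limsup_le_limsup_of_le hmap

theorem ContinuousAt.indicator_of_mem_interior {α β : Type*} [TopologicalSpace α] [Zero β]
    [TopologicalSpace β] {s : Set α} {f : α → β} {x : α} (hf : ContinuousAt f x)
    (hx : x ∈ interior s) : ContinuousAt (s.indicator f) x :=
  hf.congr (eventually_of_mem (mem_interior_iff_mem_nhds.mp hx) fun _ hy =>
    (indicator_of_mem hy f).symm)

theorem hasDerivAt_integral_indicator_one {E : Set ℝ} (hE : MeasurableSet E) (a : ℝ) {b : ℝ}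
    (hb : b ∈ interior E) :
    HasDerivAt (fun u => ∫ t in a..u, E.indicator (fun _ => (1 : ℝ)) t) 1 b := by
  have hint : IntervalIntegrable (E.indicator fun _ => (1 : ℝ)) volume a b :=
    intervalIntegrable_iff.mpr (intervalIntegrable_const.def'.indicator hE)
  simpa [indicator_of_mem (interior_subset hb)] using integral_hasDerivAt_right hint
    (measurable_const.indicator hE).aestronglyMeasurable.stronglyMeasurableAtFilter
    (continuousAt_const.indicator_of_mem_interior hb)

theorem integral_indicator_one_le {E : Set ℝ} (hE : MeasurableSet E) {T B : ℝ} (hT : 0 ≤ T)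
    (hB : 0 ≤ B) (hEB : ∀ t ∈ E, t ≤ T → t ≤ B) :
    ∫ t in (0 : ℝ)..T, E.indicator (fun _ => (1 : ℝ)) t ≤ B := by
  have hsub : Ioc 0 T ∩ E ⊆ Ioc 0 B := fun t ⟨⟨ht0, htT⟩, htE⟩ => ⟨ht0, hEB t htE htT⟩
  calc ∫ t in (0 : ℝ)..T, E.indicator (fun _ => (1 : ℝ)) t
      = volume.real (Ioc 0 T ∩ E) := by
        rw [integral_of_le hT, setIntegral_indicator hE, setIntegral_const, smul_eq_mul, mul_one]
    _ ≤ volume.real (Ioc 0 B) := measureReal_mono hsub measure_Ioc_lt_top.ne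
    _ = B := by rw [Real.volume_real_Ioc_of_le hB, sub_zero]

theorem sSup_abs_sub_image_mem_Icc {α : Type*} {g : α → ℝ} {s : Set α} {z : α} {B : ℝ}
    (hz : z ∈ s) (hg : MapsTo g s (Icc 0 B)) : sSup ((fun y => |g y - g z|) '' s) ∈ Icc 0 B := by
  have hgz := hg hz
  refine ⟨Real.sSup_nonneg ?_, Real.sSup_le ?_ (hgz.1.trans hgz.2)⟩ <;> rintro _ ⟨y, hy, rfl⟩
  · exact abs_nonneg _
  · exact abs_sub_le_of_nonneg_of_le (hg hy).1 (hg hy).2 hgz.1 hgz.2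

def expBlocks : Set ℝ :=
  ⋃ j : ℕ, ⋃ (_ : 2 ≤ j), Icc (Real.exp ((2 : ℝ) ^ j)) (Real.exp ((2 : ℝ) ^ j + 1))

theorem measurableSet_expBlocks : MeasurableSet expBlocks :=
  .iUnion fun _ => .iUnion fun _ => measurableSet_Icc

theorem exp_mem_interior_expBlocks {j : ℕ} (hj : 2 ≤ j) {x : ℝ}
    (hx : x ∈ Ioo ((2 : ℝ) ^ j) ((2 : ℝ) ^ j + 1)) : Real.exp x ∈ interior expBlocks := by
  have hsub : Ioo (Real.exp ((2 : ℝ) ^ j)) (Real.exp ((2 : ℝ) ^ j + 1)) ⊆ expBlocks :=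
    fun _ ht => mem_iUnion₂.mpr ⟨j, hj, Ioo_subset_Icc_self ht⟩
  exact interior_maximal hsub isOpen_Ioo ⟨Real.exp_lt_exp.mpr hx.1, Real.exp_lt_exp.mpr hx.2⟩

theorem le_of_mem_expBlocks_of_lt {j : ℕ} {t : ℝ} (ht : t ∈ expBlocks)
    (htj : t < Real.exp ((2 : ℝ) ^ (j + 1))) : t ≤ Real.exp ((2 : ℝ) ^ j + 1) := by
  obtain ⟨k, -, htk⟩ := mem_iUnion₂.mp ht
  rcases Nat.lt_or_ge j k with hjk | hkj
  · have : Real.exp ((2 : ℝ) ^ (j + 1)) ≤ Real.exp ((2 : ℝ) ^ k) :=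
      Real.exp_le_exp.mpr (pow_le_pow_right₀ one_le_two hjk)
    linarith [htk.1]
  · exact htk.2.trans (Real.exp_le_exp.mpr (by gcongr; norm_num))

noncomputable def blockIntegral (x : ℝ) : ℝ :=
  ∫ t in (0 : ℝ)..Real.exp x, expBlocks.indicator (fun _ => (1 : ℝ)) t

theorem hasDerivAt_blockIntegral {j : ℕ} (hj : 2 ≤ j) {x : ℝ}
    (hx : x ∈ Ioo ((2 : ℝ) ^ j) ((2 : ℝ) ^ j + 1)) : HasDerivAt blockIntegral (Real.exp x) x := by
  have h := (hasDerivAt_integral_indicator_one measurableSet_expBlocks 0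
    (exp_mem_interior_expBlocks hj hx)).comp x (Real.hasDerivAt_exp x)
  rwa [one_mul] at h

theorem blockIntegral_mem_Icc {j : ℕ} {x : ℝ} (hx : x < (2 : ℝ) ^ (j + 1)) :
    blockIntegral x ∈ Icc 0 (Real.exp ((2 : ℝ) ^ j + 1)) :=
  ⟨integral_nonneg (Real.exp_pos x).le fun _ _ => indicator_nonneg (fun _ _ => zero_le_one) _,
    integral_indicator_one_le measurableSet_expBlocks (Real.exp_pos x).le (Real.exp_pos _).le
      fun _ ht htx => le_of_mem_expBlocks_of_lt ht (htx.trans_lt (Real.exp_lt_exp.mpr hx))⟩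

theorem HasDerivAt.ofReal_abs_le_lipAt_comp_re {F : ℝ → ℝ} {F' x : ℝ} (hF : HasDerivAt F F' x) :
    ENNReal.ofReal |F'| ≤ lipAt (fun ζ : ℂ => F ζ.re) x := by
  rw [← Real.norm_eq_abs, ← hF.lipAt_eq]
  exact lipAt_comp_le_of_isometry Complex.isometry_ofReal (fun ζ : ℂ => F ζ.re) x

theorem re_lt_of_mem_ball {z ζ : ℂ} {r : ℝ} (hζ : ζ ∈ ball z r) : ζ.re < z.re + r := by
  have := (Complex.abs_re_le_norm (ζ - z)).trans_lt (mem_ball_iff_norm.mp hζ)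
  rw [Complex.sub_re] at this
  linarith [le_abs_self (ζ.re - z.re)]

theorem mapsTo_blockIntegral_re_ball {j : ℕ} (hj : 0 < j) :
    MapsTo (fun ζ : ℂ => blockIntegral ζ.re) (ball ((2 ^ j + 1 / 2 : ℝ) : ℂ) (2 ^ j / 2))
      (Icc 0 (Real.exp (2 ^ j + 1))) := by
  intro ζ hζ
  have hζx := re_lt_of_mem_ball hζ
  rw [Complex.ofReal_re] at hζx
  have : (1 : ℝ) < 2 ^ j := one_lt_pow₀ one_lt_two hj.ne'
  exact blockIntegral_mem_Icc (by rw [pow_succ]; linarith)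

theorem mul_inv_mul_lt_exp_two_pow_add_half {C S : ℝ} {j : ℕ}
    (hj : 2 * |C| * Real.exp 1 < 2 ^ j) (hS : S ∈ Icc 0 (Real.exp (2 ^ j + 1))) :
    C * (2 ^ j / 2)⁻¹ * S < Real.exp (2 ^ j + 1 / 2) :=
  calc C * (2 ^ j / 2)⁻¹ * S ≤ |C| * (2 ^ j / 2)⁻¹ * Real.exp (2 ^ j + 1) :=
        mul_le_mul (mul_le_mul_of_nonneg_right (le_abs_self C) (by positivity)) hS.2 hS.1
          (by positivity)
    _ = 2 * |C| * Real.exp 1 / 2 ^ j * Real.exp (2 ^ j) := by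
      rw [Real.exp_add]; field_simp
    _ < Real.exp (2 ^ j) :=
      mul_lt_of_lt_one_left (Real.exp_pos _) ((div_lt_one (by positivity)).mpr hj)
    _ ≤ Real.exp (2 ^ j + 1 / 2) := Real.exp_le_exp.mpr (by linarith)

/-- with `E = ⋃_{j≥2} [exp(2^j), exp(2^j+1)]` and
`v(w) = ∫₀^{|w|} χ_E(t) dt`, the function `v ∘ exp` is not regularly oscillating on `ℂ`. -/
theorem v_comp_exp_not_regularly_oscillating
    (E : Set ℝ)
    (hE : E = ⋃ j : ℕ, ⋃ (_ : 2 ≤ j),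
      Set.Icc (Real.exp ((2 : ℝ) ^ j)) (Real.exp ((2 : ℝ) ^ j + 1)))
    (v : ℂ → ℝ)
    (hv : ∀ w, v w = ∫ t in (0 : ℝ)..‖w‖, E.indicator (fun _ => (1 : ℝ)) t) :
    ¬ ∃ C : ℝ, ∀ (z : ℂ) (r : ℝ), 0 < r →
      lipAt (fun ζ => v (Complex.exp ζ)) z ≤ ENNReal.ofReal
        (C * r⁻¹ * sSup ((fun ζ => |v (Complex.exp ζ) - v (Complex.exp z)|) ''
          ball z r)) := by
  rintro ⟨C, hC⟩
  have hv_exp : ∀ ζ, v (Complex.exp ζ) = blockIntegral ζ.re := by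
    intro ζ; rw [hv, hE, Complex.norm_exp]; rfl
  obtain ⟨j, hj2, hjC⟩ := ((eventually_ge_atTop 2).and
    ((tendsto_pow_atTop_atTop_of_one_lt one_lt_two).eventually_gt_atTop
      (2 * |C| * Real.exp 1))).exists
  set x : ℝ := 2 ^ j + 1 / 2 with hx
  have hr : (0 : ℝ) < 2 ^ j / 2 := by positivity
  have hlip : ENNReal.ofReal (Real.exp x) ≤ lipAt (fun ζ : ℂ => blockIntegral ζ.re) x := by
    simpa using
      (hasDerivAt_blockIntegral hj2 ⟨by linarith, by linarith⟩).ofReal_abs_le_lipAt_comp_re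
  have hosc := sSup_abs_sub_image_mem_Icc (mem_ball_self hr)
    (mapsTo_blockIntegral_re_ball (j := j) (by omega))
  have hreg := hC x (2 ^ j / 2) hr
  simp only [hv_exp] at hreg
  exact (mul_inv_mul_lt_exp_two_pow_add_half hjC hosc).not_ge <|
    (ENNReal.ofReal_le_ofReal_iff'.mp (hlip.trans hreg)).resolve_right (Real.exp_pos x).not_ge
end
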